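/- arXiv:1005.2750 — 8 statements merged into one kernel-verified Lean document; each statement's English description precedes it below -/
import Mathlib

section
/- A loop Q satisfies the left Cheban identity x(xy·z) = (yx)(xz) for all x,y,z if and only if Q is left conjugacy closed (i.e., satisfies z·(yx) = ((zy)/z)·(zx) for all x,y,z) and satisfies (y·x)·x = x·(x·y) for all x,y (i.e., R(x)² = L(x)² for all x). -/
/-- Loop axioms packaged as hypotheses over a raw signature:
`mul` is the loop multiplication, `one` the identity,
`ld x y` is the left division `x \ y`, `rd y x` is the right division `y / x`. -/
theorem stmt0 {Q : Type*}
    (one : Q) (mul ld rd : Q → Q → Q)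
    (hone_l : ∀ x, mul one x = x) (hone_r : ∀ x, mul x one = x)
    (hld_l : ∀ x y, mul x (ld x y) = y) (hld_r : ∀ x y, ld x (mul x y) = y)
    (hrd_l : ∀ x y, mul (rd y x) x = y) (hrd_r : ∀ x y, rd (mul y x) x = y) :
    (∀ x y z, mul x (mul (mul x y) z) = mul (mul y x) (mul x z)) ↔
      ((∀ x y z, mul z (mul y x) = mul (rd (mul z y) z) (mul z x)) ∧ (∀ x y, mul (mul y x) x = mul x (mul x y))) := by
  constructor
  · intro h
    have h2 : ∀ x y, mul (mul y x) x = mul x (mul x y) := by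
      intro x y
      have := h x y one
      simpa [hone_r] using this.symm
    refine ⟨?_, h2⟩
    intro x y z
    have key : mul (mul (ld z y) z) z = mul z y := by
      rw [h2, hld_l]
    have hq : rd (mul z y) z = mul (ld z y) z := by
      rw [← key, hrd_r]
    rw [hq]
    have := h z (ld z y) x
    rwa [hld_l] at this
  · rintro ⟨hlcc, h2⟩ x y z
    have := hlcc z (mul x y) x
    rwa [← h2, hrd_r] at this
end

section
/- Every left Cheban loop satisfies the identity ((x·y)·x)·(x·z) = x·(((y·x)·x)·z) for all x,y,z. -/
/-- Loop axioms packaged as hypotheses over a raw signature: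
`mul` is the loop multiplication, `one` the identity,
`ld x y` is the left division `x \ y`, `rd y x` is the right division `y / x`. -/
theorem stmt1 {Q : Type*}
    (one : Q) (mul ld rd : Q → Q → Q)
    (hone_l : ∀ x, mul one x = x) (hone_r : ∀ x, mul x one = x)
    (hld_l : ∀ x y, mul x (ld x y) = y) (hld_r : ∀ x y, ld x (mul x y) = y)
    (hrd_l : ∀ x y, mul (rd y x) x = y) (hrd_r : ∀ x y, rd (mul y x) x = y)
    (hlc : ∀ x y z, mul x (mul (mul x y) z) = mul (mul y x) (mul x z)) :
    ∀ x y z, mul (mul (mul x y) x) (mul x z) = mul x (mul (mul (mul y x) x) z) := by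
  have h1 : ∀ x y, mul (mul y x) x = mul x (mul x y) := by
    intro x y
    have := hlc x y one
    simpa [hone_r] using this.symm
  intro x y z
  rw [h1]
  exact (hlc x (mul x y) z).symm
end

section
/- In a left Cheban loop Q, the left nucleus equals the middle nucleus: an element a satisfies a·(x·y) = (a·x)·y for all x,y if and only if it satisfies x·(a·y) = (x·a)·y for all x,y. -/
/-- Loop axioms packaged as hypotheses over a raw signature:
`mul` is the loop multiplication, `one` the identity,
`ld x y` is the left division `x \ y`, `rd y x` is the right division `y / x`. -/
theorem stmt2 {Q : Type*}
    (one : Q) (mul ld rd : Q → Q → Q)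
    (hone_l : ∀ x, mul one x = x) (hone_r : ∀ x, mul x one = x)
    (hld_l : ∀ x y, mul x (ld x y) = y) (hld_r : ∀ x y, ld x (mul x y) = y)
    (hrd_l : ∀ x y, mul (rd y x) x = y) (hrd_r : ∀ x y, rd (mul y x) x = y)
    (hlc : ∀ x y z, mul x (mul (mul x y) z) = mul (mul y x) (mul x z)) :
    ∀ a : Q, (∀ x y, mul a (mul x y) = mul (mul a x) y) ↔
      (∀ x y, mul x (mul a y) = mul (mul x a) y) := by
  intro a
  have A : ∀ x y, mul x (mul x y) = mul (mul y x) x := by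
    intro x y
    have h := hlc x y one
    simpa [hone_r, hone_l] using h
  constructor
  · intro h x y
    have h1 := hlc a (rd x a) y
    rw [hrd_l] at h1
    rw [h] at h1
    rw [A] at h1
    rw [hrd_l] at h1
    exact h1.symm
  · intro h x y
    have C' : mul a (mul x y) = mul (mul (ld a x) a) (mul a y) := by
      have h2 := hlc a (ld a x) y
      rw [hld_l] at h2
      exact h2
    rw [C', h, ← A, hld_l]
end

section
/- In a left Cheban loop Q, if a is in the left nucleus (a·(x·y) = (a·x)·y for all x,y), then a² = a·a is central: a² commutes with every element and a² satisfies a²·(x·y) = (a²·x)·y, x·(a²·y) = (x·a²)·y, and x·(y·a²) = (x·y)·a² for all x,y. -/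
/-- Loop axioms packaged as hypotheses over a raw signature:
`mul` is the loop multiplication, `one` the identity,
`ld x y` is the left division `x \ y`, `rd y x` is the right division `y / x`. -/
theorem stmt4 {Q : Type*}
    (one : Q) (mul ld rd : Q → Q → Q)
    (hone_l : ∀ x, mul one x = x) (hone_r : ∀ x, mul x one = x)
    (hld_l : ∀ x y, mul x (ld x y) = y) (hld_r : ∀ x y, ld x (mul x y) = y)
    (hrd_l : ∀ x y, mul (rd y x) x = y) (hrd_r : ∀ x y, rd (mul y x) x = y)
    (hlc : ∀ x y z, mul x (mul (mul x y) z) = mul (mul y x) (mul x z)) :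
    ∀ a : Q, (∀ x y, mul a (mul x y) = mul (mul a x) y) →
      (∀ x, mul (mul a a) x = mul x (mul a a)) ∧
      (∀ x y, mul (mul a a) (mul x y) = mul (mul (mul a a) x) y) ∧
      (∀ x y, mul x (mul (mul a a) y) = mul (mul x (mul a a)) y) ∧
      (∀ x y, mul x (mul y (mul a a)) = mul (mul x y) (mul a a)) := by
  intro a hN
  -- flexibility of a : a(xa) = (ax)a
  have flex : ∀ x, mul a (mul x a) = mul (mul a x) a := fun x => hN x a
  -- (aa)w = a(aw)
  have sq : ∀ w, mul (mul a a) w = mul a (mul a w) := fun w => (hN a w).symm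
  -- commutativity: (aa)(xa) = (xa)(aa)
  have comm' : ∀ x, mul (mul a a) (mul x a) = mul (mul x a) (mul a a) := by
    intro x
    have h := hlc a x a
    -- a((ax)a) = (xa)(aa)
    rw [← flex x] at h
    rw [sq (mul x a)]
    exact h
  have comm : ∀ x, mul (mul a a) x = mul x (mul a a) := by
    intro x
    have hx : mul (rd x a) a = x := hrd_l a x
    have := comm' (rd x a)
    rwa [hx] at this
  -- left nuclearity of a²
  have B : ∀ x y, mul (mul a a) (mul x y) = mul (mul (mul a a) x) y := by
    intro x y
    calc mul (mul a a) (mul x y) = mul a (mul a (mul x y)) := sq _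
      _ = mul a (mul (mul a x) y) := by rw [hN x y]
      _ = mul (mul a (mul a x)) y := hN _ _
      _ = mul (mul (mul a a) x) y := by rw [← sq x]
  -- key: x(a²w) = a²(xw)
  have K : ∀ x w, mul x (mul (mul a a) w) = mul (mul a a) (mul x w) := by
    intro x w
    have h := hlc x (mul a a) (ld x w)
    rw [← comm x] at h  -- now h : x ((x(aa)) = ... ; careful
    -- h : mul x (mul (mul (mul a a) x) (ld x w)) = mul (mul (mul a a) x) (mul x (ld x w))
    rw [hld_l x w, ← B x (ld x w), hld_l x w, ← B x w] at h
    exact h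
  refine ⟨comm, B, ?_, ?_⟩
  · intro x y
    rw [K x y, B x y, comm x]
  · intro x y
    rw [← comm y, K x y, comm (mul x y)]
end

section
/- If a left Cheban loop Q has the weak inverse property (i.e., x·((y·x)\1) = y\1 for all x,y), then Q satisfies the Cheban identity x·((x·y)·z) = (y·(z·x))·x for all x,y,z. -/
/-- Loop axioms packaged as hypotheses over a raw signature:
`mul` is the loop multiplication, `one` the identity,
`ld x y` is the left division `x \ y`, `rd y x` is the right division `y / x`. -/
theorem stmt9 {Q : Type*}
    (one : Q) (mul ld rd : Q → Q → Q)
    (hone_l : ∀ x, mul one x = x) (hone_r : ∀ x, mul x one = x)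
    (hld_l : ∀ x y, mul x (ld x y) = y) (hld_r : ∀ x y, ld x (mul x y) = y)
    (hrd_l : ∀ x y, mul (rd y x) x = y) (hrd_r : ∀ x y, rd (mul y x) x = y)
    (hlc : ∀ x y z, mul x (mul (mul x y) z) = mul (mul y x) (mul x z))
    (hwip : ∀ x y, mul x (ld (mul y x) one) = ld y one) :
    ∀ x y z, mul x (mul (mul x y) z) = mul (mul y (mul z x)) x := by
  -- ρ is injective
  have hinj : ∀ a b : Q, ld a one = ld b one → a = b := by
    intro a b h
    have ha : a = rd one (ld a one) := by
      have := hrd_r (ld a one) a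
      rw [hld_l a one] at this; exact this.symm
    have hb : b = rd one (ld b one) := by
      have := hrd_r (ld b one) b
      rw [hld_l b one] at this; exact this.symm
    rw [ha, hb, h]
  -- (uv)^ρ = v \ u^ρ
  have hrho : ∀ u v : Q, ld (mul u v) one = ld v (ld u one) := by
    intro u v
    have h := hwip v u
    have h2 := hld_r v (ld (mul u v) one)
    rw [h] at h2
    exact h2.symm
  intro x y z
  set t := ld (mul (mul x y) z) (ld x one) with ht
  -- (i) t = (yx·xz)^ρ
  have hi : t = ld (mul (mul y x) (mul x z)) one := by
    rw [ht, ← hrho x (mul (mul x y) z), hlc]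
  -- (ii) xz · t = (yx)^ρ
  have hii : mul (mul x z) t = ld (mul y x) one := by
    rw [hi]
    exact hwip (mul x z) (mul y x)
  -- (iii) zx · (x·t) = y^ρ
  have hiii : mul (mul z x) (mul x t) = ld y one := by
    have h := hlc x z t
    rw [hii, hwip x y] at h
    exact h.symm
  apply hinj
  rw [hrho x (mul (mul x y) z), ← ht, hrho (mul y (mul z x)) x,
    hrho y (mul z x), ← hiii, hld_r, hld_r]
end

section
/- Every Cheban loop has the weak inverse property: if a loop Q satisfies x·((x·y)·z) = (y·(z·x))·x for all x,y,z, then x·((y·x)\1) = y\1 for all x,y. -/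
/-- Loop axioms packaged as hypotheses over a raw signature:
`mul` is the loop multiplication, `one` the identity,
`ld x y` is the left division `x \ y`, `rd y x` is the right division `y / x`. -/
theorem stmt15 {Q : Type*}
    (one : Q) (mul ld rd : Q → Q → Q)
    (hone_l : ∀ x, mul one x = x) (hone_r : ∀ x, mul x one = x)
    (hld_l : ∀ x y, mul x (ld x y) = y) (hld_r : ∀ x y, ld x (mul x y) = y)
    (hrd_l : ∀ x y, mul (rd y x) x = y) (hrd_r : ∀ x y, rd (mul y x) x = y)
    (hc : ∀ x y z, mul x (mul (mul x y) z) = mul (mul y (mul z x)) x) :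
    ∀ x y, mul x (ld (mul y x) one) = ld y one := by
  set inv : Q → Q := fun a => ld a one with hinv
  -- right cancellation
  have rcan : ∀ a b x, mul a x = mul b x → a = b := by
    intro a b x h
    have := congrArg (fun t => rd t x) h
    simpa [hrd_r] using this
  -- two-sided inverse
  have inv_l : ∀ x, mul (inv x) x = one := by
    intro x
    have h := hc x (inv x) one
    rw [hld_l, hone_r, hone_r, hone_l] at h
    exact rcan _ _ x (by rw [hone_l]; exact h.symm)
  have inv_inv : ∀ x, inv (inv x) = x := by
    intro x
    have := hld_r (inv x) x
    rw [inv_l] at this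
    exact this
  -- E1 : (ab)⁻¹ · a = b⁻¹
  have E1 : ∀ a b, mul (inv (mul a b)) a = inv b := by
    intro a b
    have h := hc a b (inv (mul a b))
    rw [hld_l, hone_r] at h
    -- h : a = mul (mul b (mul (inv (mul a b)) a)) a
    have h2 : mul b (mul (inv (mul a b)) a) = one := by
      apply rcan _ _ a
      rw [← h, hone_l]
    have := hld_r b (mul (inv (mul a b)) a)
    rw [h2] at this
    exact this.symm
  intro x y
  have h := E1 x (inv (mul y x))
  rw [inv_inv] at h
  -- h : mul (inv (mul x (inv (mul y x)))) x = mul y x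
  have h2 : inv (mul x (inv (mul y x))) = y := by
    apply rcan _ _ x h
  calc mul x (ld (mul y x) one) = inv (inv (mul x (inv (mul y x)))) := (inv_inv _).symm
    _ = inv y := by rw [h2]
    _ = ld y one := rfl
end

section
/- Every Cheban loop is power associative: if Q is a loop satisfying x·((x·y)·z) = (y·(z·x))·x for all x,y,z, and powers are defined by x^0 = 1 and x^(n+1) = x^n·x, then x^m · x^n = x^(m+n) for all x ∈ Q and all natural numbers m, n. -/
/- Loop axioms packaged as hypotheses over a raw signature:
`mul` is the loop multiplication, `one` the identity,
`ld x y` is the left division `x \ y`, `rd y x` is the right division `y / x`. -/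
/-- Powers in a loop: `x ^ 0 = 1`, `x ^ (n+1) = x ^ n · x`. -/
def lpow {Q : Type*} (one : Q) (mul : Q → Q → Q) (x : Q) : ℕ → Q
  | 0 => one
  | n + 1 => mul (lpow one mul x n) x

theorem stmt16 {Q : Type*}
    (one : Q) (mul ld rd : Q → Q → Q)
    (hone_l : ∀ x, mul one x = x) (hone_r : ∀ x, mul x one = x)
    (hld_l : ∀ x y, mul x (ld x y) = y) (hld_r : ∀ x y, ld x (mul x y) = y)
    (hrd_l : ∀ x y, mul (rd y x) x = y) (hrd_r : ∀ x y, rd (mul y x) x = y)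
    (hc : ∀ x y z, mul x (mul (mul x y) z) = mul (mul y (mul z x)) x) :
    ∀ (x : Q) (m n : ℕ), mul (lpow one mul x m) (lpow one mul x n) = lpow one mul x (m + n) := by
  intro x
  -- left cancellation
  have cancel : ∀ a b : Q, mul x a = mul x b → a = b := by
    intro a b h
    have := congrArg (ld x) h
    rwa [hld_r, hld_r] at this
  -- identity A: x(xz) = (zx)x
  have A : ∀ z : Q, mul x (mul x z) = mul (mul z x) x := by
    intro z
    have := hc x one z
    rwa [hone_r, hone_l] at this
  -- L : x · x^n = x^(n+1)
  have L : ∀ n : ℕ, mul x (lpow one mul x n) = lpow one mul x (n + 1) := by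
    intro n
    induction n with
    | zero => simp [lpow, hone_r, hone_l]
    | succ k ih =>
      have h1 : mul x (lpow one mul x (k + 1)) = mul x (mul x (lpow one mul x k)) := by
        rw [ih]
      rw [h1, A]
      rfl
  intro m n
  induction m generalizing n with
  | zero => simp [lpow, hone_l]
  | succ k ih =>
    apply cancel
    have h1 : lpow one mul x (k + 1) = mul x (lpow one mul x k) := (L k).symm
    calc mul x (mul (lpow one mul x (k + 1)) (lpow one mul x n))
        = mul x (mul (mul x (lpow one mul x k)) (lpow one mul x n)) := by rw [h1]
      _ = mul (mul (lpow one mul x k) (mul (lpow one mul x n) x)) x := hc x _ _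
      _ = mul (mul (lpow one mul x k) (lpow one mul x (n + 1))) x := rfl
      _ = mul (lpow one mul x (k + (n + 1))) x := by rw [ih]
      _ = lpow one mul x (k + (n + 1) + 1) := rfl
      _ = lpow one mul x (k + 1 + n + 1) := by ring_nf
      _ = mul x (lpow one mul x (k + 1 + n)) := (L _).symm
end

section
/- In a Cheban loop Q, every square lies in the commutant: if Q satisfies x·((x·y)·z) = (y·(z·x))·x for all x,y,z, then y·(x·x) = (x·x)·y for all x,y ∈ Q. -/
/-- Loop axioms packaged as hypotheses over a raw signature:
`mul` is the loop multiplication, `one` the identity,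
`ld x y` is the left division `x \ y`, `rd y x` is the right division `y / x`. -/
theorem stmt18 {Q : Type*}
    (one : Q) (mul ld rd : Q → Q → Q)
    (hone_l : ∀ x, mul one x = x) (hone_r : ∀ x, mul x one = x)
    (hld_l : ∀ x y, mul x (ld x y) = y) (hld_r : ∀ x y, ld x (mul x y) = y)
    (hrd_l : ∀ x y, mul (rd y x) x = y) (hrd_r : ∀ x y, rd (mul y x) x = y)
    (hc : ∀ x y z, mul x (mul (mul x y) z) = mul (mul y (mul z x)) x) :
    ∀ x y, mul y (mul x x) = mul (mul x x) y := by
  intro x y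
  have hA : ∀ u z, mul u (mul u z) = mul (mul z u) u := by
    intro u z
    have h := hc u one z
    rwa [hone_r, hone_l] at h
  have hR1 : ∀ u v w, mul (mul u v) w = mul w (mul (mul w u) (rd v w)) := by
    intro u v w
    have h := hc w u (rd v w)
    rw [hrd_l] at h
    exact h.symm
  have hR2 : ∀ w u z, mul w (mul u z) = mul (mul (ld w u) (mul z w)) w := by
    intro w u z
    have h := hc w (ld w u) z
    rwa [hld_l] at h
  have hD : ∀ u v, mul u (mul (mul u v) v) = mul (mul (mul u v) v) u := by
    intro u v
    have h := hc u v v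
    rw [hA v u] at h
    exact h
  have eq0 : ∀ v0, (mul one v0) = v0 := by
    intro v0
    exact hone_l v0
  have eq1 : ∀ v0, (mul v0 one) = v0 := by
    intro v0
    exact hone_r v0
  have eq2 : ∀ v0 v1, (mul v0 (ld v0 v1)) = v1 := by
    intro v0 v1
    exact hld_l v0 v1
  have eq3 : ∀ v0 v1, (ld v0 (mul v0 v1)) = v1 := by
    intro v0 v1
    exact hld_r v0 v1
  have eq4 : ∀ v0 v1, (mul (rd v0 v1) v1) = v0 := by
    intro v0 v1
    exact hrd_l v1 v0
  have eq5 : ∀ v0 v1, (rd (mul v0 v1) v1) = v0 := by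
    intro v0 v1
    exact hrd_r v1 v0
  have eq6 : ∀ v0 v1 v2, (mul (mul v1 (mul v2 v0)) v0) = (mul v0 (mul (mul v0 v1) v2)) := by
    intro v0 v1 v2
    apply Eq.symm
    exact hc v0 v1 v2
  have eq7 : ∀ v0 v1, (mul (mul v1 v0) v0) = (mul v0 (mul v0 v1)) := by
    intro v0 v1
    apply Eq.symm
    exact hA v0 v1
  have eq9 : ∀ v0 v1 v2, (mul (mul (ld v0 v1) (mul v2 v0)) v0) = (mul v0 (mul v1 v2)) := by
    intro v0 v1 v2
    apply Eq.symm
    exact hR2 v0 v1 v2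
  have eq12 : ∀ v0, (ld v0 v0) = one := by
    intro v0
    conv_lhs => enter [2]; rw [← eq1 v0]
    exact eq3 v0 one
  have eq14 : ∀ v0, (rd v0 v0) = one := by
    intro v0
    conv_lhs => enter [1]; rw [← eq0 v0]
    exact eq5 one v0
  have eq15 : ∀ v0 v1, (ld (rd v0 v1) v0) = v1 := by
    intro v0 v1
    conv_lhs => enter [2]; rw [← eq4 v0 v1]
    exact eq3 (rd v0 v1) v1
  have eq16 : ∀ v0 v1, (rd v0 (ld v1 v0)) = v1 := by
    intro v0 v1
    conv_lhs => enter [1]; rw [← eq2 v1 v0]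
    exact eq5 v1 (ld v1 v0)
  have eq17 : ∀ v0 v1, (ld (mul v0 v1) (mul v1 (mul v1 v0))) = v1 := by
    intro v0 v1
    conv_lhs => enter [2]; rw [← eq7 v1 v0]
    exact eq3 (mul v0 v1) v1
  have eq18 : ∀ v0 v1, (mul v1 (mul v1 (rd v0 v1))) = (mul v0 v1) := by
    intro v0 v1
    apply Eq.symm
    conv_lhs => enter [1]; rw [← eq4 v0 v1]
    exact eq7 v1 (rd v0 v1)
  have eq19 : ∀ v0 v1, (rd (mul v0 (mul v0 v1)) v0) = (mul v1 v0) := by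
    intro v0 v1
    conv_lhs => enter [1]; rw [← eq7 v0 v1]
    exact eq5 (mul v1 v0) v0
  have eq21 : ∀ v0 v1, (ld (mul (ld v0 v1) v0) (mul v0 v1)) = v0 := by
    intro v0 v1
    conv_lhs => enter [2,2]; rw [← eq2 v0 v1]
    exact eq17 (ld v0 v1) v0
  have eq22 : ∀ v0, (ld (mul (ld v0 one) v0) v0) = v0 := by
    intro v0
    conv_lhs => enter [2]; rw [← eq1 v0]
    exact eq21 v0 one
  have eq23 : ∀ v0, (mul (ld v0 one) v0) = one := by
    intro v0
    apply Eq.symm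
    conv_lhs => rw [← eq14 v0]
    conv_lhs => enter [2]; rw [← eq22 v0]
    exact eq16 v0 (mul (ld v0 one) v0)
  have eq26 : ∀ v0, (rd one v0) = (ld v0 one) := by
    intro v0
    conv_lhs => enter [1]; rw [← eq23 v0]
    exact eq5 (ld v0 one) v0
  have eq27 : ∀ v0 v1, (ld v0 (mul v1 v0)) = (mul v0 (rd v1 v0)) := by
    intro v0 v1
    conv_lhs => enter [2]; rw [← eq18 v1 v0]
    exact eq3 v0 (mul v0 (rd v1 v0))
  have eq30 : ∀ v0 v1, (rd (mul v0 v1) v0) = (mul (ld v0 v1) v0) := by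
    intro v0 v1
    conv_lhs => enter [1,2]; rw [← eq2 v0 v1]
    exact eq19 v0 (ld v0 v1)
  have eq35 : ∀ v0 v1 v2, (mul v1 (mul (mul v1 (rd v0 (mul v2 v1))) v2)) = (mul v0 v1) := by
    intro v0 v1 v2
    apply Eq.symm
    conv_lhs => enter [1]; rw [← eq4 v0 (mul v2 v1)]
    exact eq6 v1 (rd v0 (mul v2 v1)) v2
  have eq36 : ∀ v0 v1 v2, (mul (ld v0 (mul (mul v0 v1) v2)) v0) = (mul v1 (mul v2 v0)) := by
    intro v0 v1 v2
    conv_lhs => rw [← eq30 v0 (mul (mul v0 v1) v2)]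
    conv_lhs => enter [1]; rw [← eq6 v0 v1 v2]
    exact eq5 (mul v1 (mul v2 v0)) v0
  have eq40 : ∀ v0 v1, (mul v0 (mul (mul v0 (ld (mul v1 v0) one)) v1)) = v0 := by
    intro v0 v1
    apply Eq.symm
    conv_lhs => rw [← eq0 v0]
    conv_lhs => enter [1]; rw [← eq23 (mul v1 v0)]
    exact eq6 v0 (ld (mul v1 v0) one) v1
  have eq41 : ∀ v0 v1, (mul v1 (mul (mul v1 v0) (ld v1 one))) = (mul v0 v1) := by
    intro v0 v1
    apply Eq.symm
    conv_lhs => enter [1]; rw [← eq1 v0]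
    conv_lhs => enter [1,2]; rw [← eq23 v1]
    exact eq6 v1 v0 (ld v1 one)
  have eq44 : ∀ v0 v1, (mul v0 (mul (mul v0 v0) (ld v0 v1))) = (mul v1 (mul v0 v0)) := by
    intro v0 v1
    conv_lhs => rw [← eq6 v0 v0 (ld v0 v1)]
    conv_lhs => enter [1,2]; rw [← eq30 v0 v1]
    conv_lhs => enter [1]; rw [← eq27 v0 (mul v0 v1)]
    exact eq36 v0 v1 v0
  have eq52 : ∀ v0 v1, (mul (mul v0 (ld (mul v1 v0) one)) v1) = one := by
    intro v0 v1
    apply Eq.symm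
    conv_lhs => rw [← eq12 v0]
    conv_lhs => enter [2]; rw [← eq40 v0 v1]
    exact eq3 v0 (mul (mul v0 (ld (mul v1 v0) one)) v1)
  have eq53 : ∀ v0 v1, (mul (mul (ld v0 v1) (ld v1 one)) v0) = one := by
    intro v0 v1
    conv_lhs => enter [1,2,1]; rw [← eq2 v0 v1]
    exact eq52 (ld v0 v1) v0
  have eq54 : ∀ v0 v1, (ld (mul v0 (ld (mul v1 v0) one)) one) = v1 := by
    intro v0 v1
    conv_lhs => enter [2]; rw [← eq52 v0 v1]
    exact eq3 (mul v0 (ld (mul v1 v0) one)) v1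
  have eq56 : ∀ v0 v1, (mul (mul (ld (mul v0 v1) one) v0) v1) = one := by
    intro v0 v1
    conv_lhs => enter [1,2]; rw [← eq54 v1 v0]
    exact eq52 (ld (mul v0 v1) one) v1
  have eq58 : ∀ v0 v1, (mul (mul v0 (ld v1 one)) (rd v1 v0)) = one := by
    intro v0 v1
    conv_lhs => enter [1,2,1]; rw [← eq4 v1 v0]
    exact eq52 v0 (rd v1 v0)
  have eq59 : ∀ v0 v1, (mul v1 (ld (mul v0 v1) one)) = (ld v0 one) := by
    intro v0 v1
    apply Eq.symm
    conv_lhs => rw [← eq26 v0]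
    conv_lhs => enter [1]; rw [← eq52 v1 v0]
    exact eq5 (mul v1 (ld (mul v0 v1) one)) v0
  have eq60 : ∀ v0 v1, (mul (mul (ld v0 (ld v1 one)) v1) v0) = one := by
    intro v0 v1
    conv_lhs => enter [1,1,2]; rw [← eq26 v1]
    conv_lhs => enter [1,2]; rw [← eq15 one v1]
    exact eq53 v0 (rd one v1)
  have eq67 : ∀ v0 v1, (mul (ld (mul v1 v0) one) v1) = (ld v0 one) := by
    intro v0 v1
    apply Eq.symm
    conv_lhs => rw [← eq26 v0]
    conv_lhs => enter [1]; rw [← eq56 v1 v0]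
    exact eq5 (mul (ld (mul v1 v0) one) v1) v0
  have eq89 : ∀ v0 v1, (mul (mul v0 v1) (ld v0 one)) = (mul v0 (rd v1 v0)) := by
    intro v0 v1
    apply Eq.symm
    conv_lhs => rw [← eq27 v0 v1]
    conv_lhs => enter [2]; rw [← eq41 v1 v0]
    exact eq3 v0 (mul (mul v0 v1) (ld v0 one))
  have eq96 : ∀ v0 v1, (mul (mul v0 (rd v1 v0)) (rd v0 (mul v0 v1))) = one := by
    intro v0 v1
    conv_lhs => enter [1]; rw [← eq89 v0 v1]
    exact eq58 (mul v0 v1) v0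
  have eq97 : ∀ v0 v1, (mul (mul v0 v1) (rd v0 (mul v0 (mul v1 v0)))) = one := by
    intro v0 v1
    conv_lhs => enter [1,2]; rw [← eq5 v1 v0]
    exact eq96 v0 (mul v1 v0)
  have eq104 : ∀ v0 v1, (rd v0 (mul v0 (mul v1 v0))) = (ld (mul v0 v1) one) := by
    intro v0 v1
    apply Eq.symm
    conv_lhs => enter [2]; rw [← eq97 v0 v1]
    exact eq3 (mul v0 v1) (rd v0 (mul v0 (mul v1 v0)))
  have eq105 : ∀ v0 v1, (mul (ld (mul v0 v1) one) (mul v0 (mul v1 v0))) = v0 := by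
    intro v0 v1
    conv_lhs => enter [1]; rw [← eq104 v0 v1]
    exact eq4 v0 (mul v0 (mul v1 v0))
  have eq107 : ∀ v0 v1, (mul v0 (mul v1 (mul (ld (mul v0 v1) one) v1))) = v1 := by
    intro v0 v1
    conv_lhs => enter [1]; rw [← eq54 v1 v0]
    exact eq105 v1 (ld (mul v0 v1) one)
  have eq120 : ∀ v0 v1, (mul (rd v0 v1) (mul v1 (mul (ld v0 one) v1))) = v1 := by
    intro v0 v1
    conv_lhs => enter [2,2,1,1]; rw [← eq4 v0 v1]
    exact eq107 (rd v0 v1) v1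
  have eq129 : ∀ v0 v1, (mul (mul (ld v0 v1) v0) (mul v0 (ld v1 one))) = v0 := by
    intro v0 v1
    conv_lhs => enter [1]; rw [← eq30 v0 v1]
    conv_lhs => enter [2,2]; rw [← eq67 v1 v0]
    exact eq120 (mul v0 v1) v0
  have eq130 : ∀ v0 v1, (mul (mul v0 v1) (mul v1 (ld (mul v1 v0) one))) = v1 := by
    intro v0 v1
    conv_lhs => enter [1,1]; rw [← eq3 v1 v0]
    exact eq129 v1 (mul v1 v0)
  have eq131 : ∀ v0 v1, (mul (mul (ld (mul v0 v1) one) v1) (mul v1 v0)) = v1 := by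
    intro v0 v1
    conv_lhs => enter [2,2]; rw [← eq54 v1 v0]
    exact eq130 (ld (mul v0 v1) one) v1
  have eq150 : ∀ v0 v1, (mul (mul (ld (mul (ld v0 v1) v0) one) v0) v1) = v0 := by
    intro v0 v1
    conv_lhs => enter [2]; rw [← eq2 v0 v1]
    exact eq131 (ld v0 v1) v0
  have eq193 : ∀ v0 v1, (ld (mul v1 v0) one) = (ld v0 (ld v1 one)) := by
    intro v0 v1
    apply Eq.symm
    conv_lhs => enter [2]; rw [← eq59 v1 v0]
    exact eq3 v0 (ld (mul v1 v0) one)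
  have eq201 : ∀ v0 v1, (mul (ld v0 (ld v1 one)) v1) = (ld v0 one) := by
    intro v0 v1
    apply Eq.symm
    conv_lhs => rw [← eq26 v0]
    conv_lhs => enter [1]; rw [← eq60 v0 v1]
    exact eq5 (mul (ld v0 (ld v1 one)) v1) v0
  have eq209 : ∀ v0 v1, (rd (ld v0 one) v1) = (ld v0 (ld v1 one)) := by
    intro v0 v1
    conv_rhs => rw [← eq193 v0 v1]
    conv_lhs => enter [1]; rw [← eq67 v0 v1]
    exact eq5 (ld (mul v1 v0) one) v1
  have eq235 : ∀ v0 v1 v2, (mul (mul v0 (mul v1 v2)) (mul v2 (ld v1 (ld v0 (ld v2 one))))) = v2 := by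
    intro v0 v1 v2
    conv_lhs => enter [2,2,2]; rw [← eq193 v0 v2]
    conv_lhs => enter [2,2]; rw [← eq193 v1 (mul v2 v0)]
    conv_lhs => enter [1]; rw [← eq36 v2 v0 v1]
    exact eq129 v2 (mul (mul v2 v0) v1)
  have eq236 : ∀ v0 v1, (mul (mul v0 (mul v1 v1)) (ld v0 (ld v1 one))) = v1 := by
    intro v0 v1
    conv_lhs => enter [2]; rw [← eq2 v1 (ld v0 (ld v1 one))]
    exact eq235 v0 v1 v1
  have eq237 : ∀ v0 v1, (mul (mul (ld v0 (ld v1 one)) (mul v0 v0)) v1) = v0 := by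
    intro v0 v1
    conv_lhs => enter [1,1]; rw [← eq209 v0 v1]
    conv_lhs => enter [2]; rw [← eq15 (ld v0 one) v1]
    exact eq236 (rd (ld v0 one) v1) v0
  have eq238 : ∀ v0 v1, (mul (mul (ld v0 v1) (mul v0 v0)) (ld v1 one)) = v0 := by
    intro v0 v1
    conv_lhs => enter [2]; rw [← eq26 v1]
    conv_lhs => enter [1,1,2]; rw [← eq15 one v1]
    exact eq237 v0 (rd one v1)
  have eq239 : ∀ v0 v1, (mul v0 (rd v1 (mul (ld v0 v1) (mul v0 v0)))) = one := by
    intro v0 v1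
    conv_lhs => enter [1]; rw [← eq238 v0 v1]
    exact eq58 (mul (ld v0 v1) (mul v0 v0)) v1
  have eq240 : ∀ v0 v1, (mul v0 (rd (mul v0 v1) (mul v1 (mul v0 v0)))) = one := by
    intro v0 v1
    conv_lhs => enter [2,2,1]; rw [← eq3 v0 v1]
    exact eq239 v0 (mul v0 v1)
  have eq243 : ∀ v0 v1, (rd (mul v0 v1) (mul v1 (mul v0 v0))) = (ld v0 one) := by
    intro v0 v1
    apply Eq.symm
    conv_lhs => enter [2]; rw [← eq240 v0 v1]
    exact eq3 v0 (rd (mul v0 v1) (mul v1 (mul v0 v0)))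
  have eq244 : ∀ v0 v1, (mul (ld v0 one) (mul v1 (mul v0 v0))) = (mul v0 v1) := by
    intro v0 v1
    conv_lhs => enter [1]; rw [← eq243 v0 v1]
    exact eq4 (mul v0 v1) (mul v1 (mul v0 v0))
  have eq250 : ∀ v0 v1, (mul v0 (rd v1 (mul v0 v0))) = (mul (ld v0 one) v1) := by
    intro v0 v1
    apply Eq.symm
    conv_lhs => enter [2]; rw [← eq4 v1 (mul v0 v0)]
    exact eq244 v0 (rd v1 (mul v0 v0))
  have eq251 : ∀ v0 v1, (mul v0 (mul (mul (ld v0 one) v1) v0)) = (mul v1 v0) := by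
    intro v0 v1
    conv_lhs => enter [2,1]; rw [← eq250 v0 v1]
    exact eq35 v1 v0 v0
  have eq289 : ∀ v0 v1 v2, (mul (mul (ld (mul v0 v1) (ld v2 one)) v1) (mul (mul v1 v2) v0)) = v1 := by
    intro v0 v1 v2
    conv_lhs => enter [1,1]; rw [← eq193 (mul v0 v1) v2]
    conv_lhs => enter [1,1,1]; rw [← eq36 v1 v2 v0]
    exact eq150 v1 (mul (mul v1 v2) v0)
  have eq290 : ∀ v0 v1, (mul (ld v0 (ld v1 one)) (mul (mul v0 v0) v1)) = v0 := by
    intro v0 v1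
    conv_lhs => enter [1]; rw [← eq193 v0 v1]
    conv_lhs => enter [1]; rw [← eq201 (mul v1 v0) v0]
    exact eq289 v1 v0 v0
  have eq291 : ∀ v0 v1, (mul (ld v0 v1) (mul (mul v0 v0) (ld v1 one))) = v0 := by
    intro v0 v1
    conv_lhs => enter [2,2]; rw [← eq26 v1]
    conv_lhs => enter [1,2]; rw [← eq15 one v1]
    exact eq290 v0 (rd one v1)
  have eq293 : ∀ v0 v1, (mul (ld v0 (mul v1 (mul v0 v0))) (ld v1 one)) = v0 := by
    intro v0 v1
    conv_lhs => enter [2]; rw [← eq59 v1 (mul v0 v0)]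
    exact eq291 v0 (mul v1 (mul v0 v0))
  have eq295 : ∀ v0 v1, (mul v0 (rd v1 (ld v0 (mul v1 (mul v0 v0))))) = one := by
    intro v0 v1
    conv_lhs => enter [1]; rw [← eq293 v0 v1]
    exact eq58 (ld v0 (mul v1 (mul v0 v0))) v1
  have eq339 : ∀ v0 v1 v2, (mul (ld v0 (mul v1 v2)) v0) = (mul (ld v0 v1) (mul v2 v0)) := by
    intro v0 v1 v2
    conv_lhs => rw [← eq30 v0 (mul v1 v2)]
    conv_lhs => enter [1]; rw [← eq9 v0 v1 v2]
    exact eq5 (mul (ld v0 v1) (mul v2 v0)) v0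
  have eq358 : ∀ v0 v1, (ld v0 (mul v1 (mul v0 v0))) = (mul (mul v0 v0) (ld v0 v1)) := by
    intro v0 v1
    conv_lhs => enter [2]; rw [← eq44 v0 v1]
    exact eq3 v0 (mul (mul v0 v0) (ld v0 v1))
  have eq362 : ∀ v0 v1, (mul v0 (rd v1 (mul (mul v0 v0) (ld v0 v1)))) = one := by
    intro v0 v1
    conv_lhs => enter [2,2]; rw [← eq358 v0 v1]
    exact eq295 v0 v1
  have eq363 : ∀ v0 v1, (mul v0 (rd (mul v0 v1) (mul (mul v0 v0) v1))) = one := by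
    intro v0 v1
    conv_lhs => enter [2,2,2]; rw [← eq3 v0 v1]
    exact eq362 v0 (mul v0 v1)
  have eq367 : ∀ v0 v1, (rd (mul v0 v1) (mul (mul v0 v0) v1)) = (ld v0 one) := by
    intro v0 v1
    apply Eq.symm
    conv_lhs => enter [2]; rw [← eq363 v0 v1]
    exact eq3 v0 (rd (mul v0 v1) (mul (mul v0 v0) v1))
  have eq368 : ∀ v0 v1, (mul (ld v0 one) (mul (mul v0 v0) v1)) = (mul v0 v1) := by
    intro v0 v1
    conv_lhs => enter [1]; rw [← eq367 v0 v1]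
    exact eq4 (mul v0 v1) (mul (mul v0 v0) v1)
  have eq369 : ∀ v0 v1, (mul (mul (mul v0 v0) v1) v0) = (mul v0 (mul (mul v0 v1) v0)) := by
    intro v0 v1
    apply Eq.symm
    conv_lhs => enter [2,1]; rw [← eq368 v0 v1]
    exact eq251 v0 (mul (mul v0 v0) v1)
  have eq376 : ∀ v0 v1, (mul v0 (mul v1 v1)) = (mul (mul v1 v1) v0) := by
    intro v0 v1
    conv_lhs => rw [← eq36 v1 v0 v1]
    conv_lhs => rw [← eq30 v1 (mul (mul v1 v0) v1)]
    conv_lhs => enter [1]; rw [← eq369 v1 v0]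
    exact eq5 (mul (mul v1 v1) v0) v1
  have eq380 : ∀ v0 v1, (mul (ld v0 v1) (mul v1 v0)) = (mul v1 v1) := by
    intro v0 v1
    conv_lhs => rw [← eq339 v0 v1 v1]
    conv_lhs => rw [← eq30 v0 (mul v1 v1)]
    conv_lhs => enter [1]; rw [eq376 v0 v1]
    exact eq5 (mul v1 v1) v0
  exact eq376 y x
end
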